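/- arXiv:1009.3599 — 5 statements merged into one kernel-verified Lean document; each statement's English description precedes it below -/
import Mathlib

section
/- For any regular expression α, the size of the partial derivative automaton A_pd(α), i.e. the number of partial derivatives |PD(α)|, is at most |α|_Σ + 1, where |α|_Σ is the alphabetic size of α. -/
open RegularExpression
open scoped Classical

variable {σ : Type*}

/-- `S ⊙ β`: append `β` on the right to every element of `S`, with `S ⊙ ∅ = ∅`. -/
noncomputable def odot (S : Finset (RegularExpression σ)) (β : RegularExpression σ) :
    Finset (RegularExpression σ) :=
  if β = zero then ∅ else S.image (fun γ => comp γ β)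

/-- Antimirov's partial derivative of a regular expression w.r.t. a letter. -/
noncomputable def pd (a : σ) : RegularExpression σ → Finset (RegularExpression σ)
  | zero => ∅
  | epsilon => ∅
  | char b => if b = a then {epsilon} else ∅
  | plus P Q => pd a P ∪ pd a Q
  | comp P Q =>
      if [] ∈ P.matches' then odot (pd a P) Q ∪ pd a Q else odot (pd a P) Q
  | RegularExpression.star P => odot (pd a P) (RegularExpression.star P)

/-- Partial derivative of a finite set of regular expressions w.r.t. a letter. -/
noncomputable def pdSet (a : σ) (S : Finset (RegularExpression σ)) :
    Finset (RegularExpression σ) :=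
  S.biUnion (pd a)

/-- Partial derivatives w.r.t. a word: `∂_ε(α) = {α}`, `∂_{wσ}(α) = ∂_σ(∂_w(α))`. -/
noncomputable def pdWord (α : RegularExpression σ) (w : List σ) :
    Finset (RegularExpression σ) :=
  w.foldl (fun S a => pdSet a S) {α}

/-- The set of all partial derivatives of `α`. -/
def PD (α : RegularExpression σ) : Set (RegularExpression σ) :=
  {β | ∃ w : List σ, β ∈ pdWord α w}

/-- Alphabetic size: number of letter occurrences. -/
def alph : RegularExpression σ → ℕ
  | zero => 0
  | epsilon => 0
  | char _ => 1
  | plus P Q => alph P + alph Q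
  | comp P Q => alph P + alph Q
  | RegularExpression.star P => alph P

/-- The language of a finite set of regular expressions. -/
def langOf (S : Finset (RegularExpression σ)) : Language σ :=
  {w | ∃ β ∈ S, w ∈ β.matches'}

/-- Support: the set of proper partial derivatives. -/
noncomputable def supp : RegularExpression σ → Finset (RegularExpression σ)
  | zero => ∅
  | epsilon => ∅
  | char _ => {epsilon}
  | plus P Q => supp P ∪ supp Q
  | comp P Q => odot (supp P) Q ∪ supp Q
  | RegularExpression.star P => odot (supp P) (RegularExpression.star P)

lemma odot_mono {S T : Finset (RegularExpression σ)} (h : S ⊆ T)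
    (β : RegularExpression σ) : odot S β ⊆ odot T β := by
  unfold odot
  split
  · exact Finset.Subset.refl _
  · exact Finset.image_subset_image h

lemma pd_subset_supp (a : σ) (α : RegularExpression σ) : pd a α ⊆ supp α := by
  induction α with
  | zero => simp [pd, supp]
  | epsilon => simp [pd, supp]
  | char b =>
      simp only [pd, supp]
      split <;> simp
  | plus P Q ihP ihQ =>
      simp only [pd, supp]
      exact Finset.union_subset_union ihP ihQ
  | comp P Q ihP ihQ =>
      simp only [pd, supp]
      split
      · exact Finset.union_subset_union (odot_mono ihP Q) ihQ
      · exact (odot_mono ihP Q).trans Finset.subset_union_left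
  | star P ihP =>
      simp only [pd, supp]
      exact odot_mono ihP _

lemma mem_odot {S : Finset (RegularExpression σ)} {β γ : RegularExpression σ}
    (h : γ ∈ odot S β) : β ≠ zero ∧ ∃ δ ∈ S, γ = comp δ β := by
  unfold odot at h
  split at h
  · simp at h
  · next hβ =>
      simp only [Finset.mem_image] at h
      obtain ⟨δ, hδ, rfl⟩ := h
      exact ⟨hβ, δ, hδ, rfl⟩

lemma comp_mem_odot {S : Finset (RegularExpression σ)} {δ β : RegularExpression σ}
    (hβ : β ≠ zero) (hδ : δ ∈ S) : comp δ β ∈ odot S β := by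
  unfold odot
  rw [if_neg hβ]
  exact Finset.mem_image_of_mem _ hδ

lemma supp_closed (a : σ) (α : RegularExpression σ) :
    ∀ β ∈ supp α, pd a β ⊆ supp α := by
  induction α with
  | zero => simp [supp]
  | epsilon => simp [supp]
  | char b =>
      intro β hβ
      simp only [supp, Finset.mem_singleton] at hβ
      subst hβ
      simp [pd]
  | plus P Q ihP ihQ =>
      intro β hβ
      simp only [supp, Finset.mem_union] at hβ
      rcases hβ with h | h
      · exact (ihP β h).trans Finset.subset_union_left
      · exact (ihQ β h).trans Finset.subset_union_right
  | comp P Q ihP ihQ =>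
      intro β hβ
      simp only [supp, Finset.mem_union] at hβ
      rcases hβ with h | h
      · obtain ⟨hQ, δ, hδ, rfl⟩ := mem_odot h
        have h1 : odot (pd a δ) Q ⊆ supp (comp P Q) :=
          (odot_mono (ihP δ hδ) Q).trans Finset.subset_union_left
        have h2 : pd a Q ⊆ supp (comp P Q) :=
          (pd_subset_supp a Q).trans Finset.subset_union_right
        simp only [pd]
        split
        · exact Finset.union_subset h1 h2
        · exact h1
      · exact (ihQ β h).trans Finset.subset_union_right
  | star P ihP =>
      intro β hβ
      obtain ⟨hne, δ, hδ, rfl⟩ := mem_odot hβ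
      have h1 : odot (pd a δ) (RegularExpression.star P) ⊆ supp (RegularExpression.star P) :=
        odot_mono (ihP δ hδ) _
      have h2 : pd a (RegularExpression.star P) ⊆ supp (RegularExpression.star P) := by
        simp only [pd, supp]
        exact odot_mono (pd_subset_supp a P) _
      simp only [pd]
      split
      · exact Finset.union_subset h1 h2
      · exact h1

lemma card_supp_le (α : RegularExpression σ) : (supp α).card ≤ alph α := by
  have hodot : ∀ (S : Finset (RegularExpression σ)) (β : RegularExpression σ),
      (odot S β).card ≤ S.card := by
    intro S β
    unfold odot
    split
    · simp
    · exact Finset.card_image_le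
  induction α with
  | zero => simp [supp, alph]
  | epsilon => simp [supp, alph]
  | char b => simp [supp, alph]
  | plus P Q ihP ihQ =>
      calc (supp (plus P Q)).card ≤ (supp P).card + (supp Q).card :=
            Finset.card_union_le _ _
        _ ≤ alph P + alph Q := Nat.add_le_add ihP ihQ
  | comp P Q ihP ihQ =>
      calc (supp (comp P Q)).card ≤ (odot (supp P) Q).card + (supp Q).card :=
            Finset.card_union_le _ _
        _ ≤ (supp P).card + (supp Q).card := Nat.add_le_add (hodot _ _) le_rfl
        _ ≤ alph P + alph Q := Nat.add_le_add ihP ihQ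
  | star P ihP =>
      exact (hodot _ _).trans ihP

lemma pdWord_subset (α : RegularExpression σ) (w : List σ) :
    pdWord α w ⊆ {α} ∪ supp α := by
  have key : ∀ (w : List σ) (S : Finset (RegularExpression σ)),
      S ⊆ {α} ∪ supp α → w.foldl (fun S a => pdSet a S) S ⊆ {α} ∪ supp α := by
    intro w
    induction w with
    | nil => intro S hS; exact hS
    | cons a w ih =>
        intro S hS
        simp only [List.foldl_cons]
        apply ih
        intro β hβ
        simp only [pdSet, Finset.mem_biUnion] at hβ
        obtain ⟨γ, hγS, hβγ⟩ := hβ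
        have := hS hγS
        simp only [Finset.mem_union, Finset.mem_singleton] at this
        rcases this with rfl | h
        · exact Finset.mem_union_right _ (pd_subset_supp a γ hβγ)
        · exact Finset.mem_union_right _ (supp_closed a α γ h hβγ)
  exact key w {α} (by simp)

/-- The number of partial derivatives of `α` is at most `|α|_Σ + 1`. -/
theorem card_PD_le (α : RegularExpression σ) :
    (PD α).Finite ∧ (PD α).ncard ≤ alph α + 1 := by
  have hsub : PD α ⊆ ↑({α} ∪ supp α : Finset (RegularExpression σ)) := by
    intro β hβ
    obtain ⟨w, hw⟩ := hβ
    exact_mod_cast pdWord_subset α w hw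
  have hfin : (PD α).Finite := Set.Finite.subset (Finset.finite_toSet _) hsub
  refine ⟨hfin, ?_⟩
  calc (PD α).ncard ≤ (↑({α} ∪ supp α : Finset (RegularExpression σ)) : Set _).ncard :=
        Set.ncard_le_ncard hsub (Finset.finite_toSet _)
    _ = ({α} ∪ supp α : Finset (RegularExpression σ)).card := Set.ncard_coe_finset _
    _ ≤ 1 + (supp α).card := by
        simpa using Finset.card_union_le ({α} : Finset (RegularExpression σ)) (supp α)
    _ ≤ 1 + alph α := Nat.add_le_add le_rfl (card_supp_le α)
    _ = alph α + 1 := Nat.add_comm _ _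
end

section
/- For every regular expression α and letter σ, the language of the set of partial derivatives satisfies L(∂_σ(α)) = σ⁻¹L(α) = {w : σw ∈ L(α)}, where L(S) denotes the union of the languages of the expressions in S. -/
open RegularExpression
open scoped Classical

variable {σ : Type*}

/-!
Antimirov's partial derivative is Brzozowski's derivative split into summands: the two are
defined by the same recursion, with `∪` and `⊙` in place of `+` and `*`, so induction on `α` gives
`L(∂_a α) = L(α.deriv a)`. Correctness of Mathlib's derivative-based matcher `rmatch` identifies
the latter with `a⁻¹ L(α)`.
-/

namespace RegularExpression

variable [DecidableEq σ]

theorem matchEpsilon_iff (P : RegularExpression σ) : P.matchEpsilon ↔ [] ∈ P.matches' :=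
  rmatch_iff_matches' P []

theorem matches'_deriv (P : RegularExpression σ) (a : σ) :
    (P.deriv a).matches' = {w | a :: w ∈ P.matches'} := by
  ext w
  exact (rmatch_iff_matches' _ w).symm.trans (rmatch_iff_matches' P (a :: w))

end RegularExpression

theorem mem_langOf {S : Finset (RegularExpression σ)} {w : List σ} :
    w ∈ langOf S ↔ ∃ β ∈ S, w ∈ β.matches' :=
  Iff.rfl

theorem langOf_empty : langOf (∅ : Finset (RegularExpression σ)) = 0 := by
  ext w
  simp [mem_langOf, Language.notMem_zero]

theorem langOf_singleton (β : RegularExpression σ) : langOf {β} = β.matches' := by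
  ext w
  simp [mem_langOf]

theorem langOf_union (S T : Finset (RegularExpression σ)) :
    langOf (S ∪ T) = langOf S + langOf T := by
  ext w
  simp only [mem_langOf, Finset.mem_union, Language.mem_add, or_and_right, exists_or]

theorem langOf_odot (S : Finset (RegularExpression σ)) (β : RegularExpression σ) :
    langOf (odot S β) = langOf S * β.matches' := by
  rw [odot]
  split_ifs with hβ
  · rw [langOf_empty, hβ, matches', mul_zero]
  · ext w
    simp only [mem_langOf, Finset.mem_image, Language.mem_mul]
    constructor
    · rintro ⟨_, ⟨γ, hγ, rfl⟩, hw⟩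
      obtain ⟨u, hu, v, hv, rfl⟩ := Language.mem_mul.1 hw
      exact ⟨u, ⟨γ, hγ, hu⟩, v, hv, rfl⟩
    · rintro ⟨u, ⟨γ, hγ, hu⟩, v, hv, rfl⟩
      exact ⟨comp γ β, ⟨γ, hγ, rfl⟩, Language.append_mem_mul hu hv⟩

theorem langOf_pd_eq_matches'_deriv [DecidableEq σ] (a : σ) (α : RegularExpression σ) :
    langOf (pd a α) = (α.deriv a).matches' := by
  induction α with
  | zero | epsilon => exact langOf_empty
  | char b =>
    by_cases hb : b = a
    · simp [pd, RegularExpression.deriv, hb, langOf_singleton, matches']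
    · simp [pd, RegularExpression.deriv, hb, langOf_empty, matches']
  | plus P Q ihP ihQ => rw [pd, langOf_union, ihP, ihQ]; rfl
  | comp P Q ihP ihQ =>
    by_cases hP : [] ∈ P.matches'
    · simp only [pd, if_pos hP, langOf_union, langOf_odot, ihP, ihQ, RegularExpression.deriv,
        (matchEpsilon_iff P).2 hP]
      rfl
    · simp only [pd, if_neg hP, langOf_odot, ihP, RegularExpression.deriv,
        mt (matchEpsilon_iff P).1 hP]
      rfl
  | star P ihP => rw [pd, langOf_odot, ihP]; rfl

/-- `L(∂_σ(α)) = σ⁻¹ L(α)`. -/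
theorem langOf_pd (α : RegularExpression σ) (a : σ) :
    langOf (pd a α) = {w | a :: w ∈ α.matches'} := by
  rw [langOf_pd_eq_matches'_deriv, matches'_deriv]
end

section
/- If E is a right-invariant equivalence relation on the states of an NFA A, then the quotient automaton A/E accepts the same language as A: L(A/E) = L(A). -/
/-- `E` is a right-invariant equivalence relation w.r.t. the NFA `M`:
it is an equivalence, it refines the partition `{Q∖F, F}`, and related
states have the same sets of `E`-classes of successors. -/
def RightInvariant {A Q : Type*} (M : NFA A Q) (E : Q → Q → Prop) : Prop :=
  Equivalence E ∧
  (∀ p q, E p q → (p ∈ M.accept ↔ q ∈ M.accept)) ∧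
  (∀ p q a, E p q →
    (∀ r ∈ M.step p a, ∃ s ∈ M.step q a, E r s) ∧
    (∀ s ∈ M.step q a, ∃ r ∈ M.step p a, E r s))

/-- The quotient of an NFA by an equivalence relation on its states. -/
def quotNFA {A Q : Type*} (M : NFA A Q) (s : Setoid Q) : NFA A (Quotient s) where
  step := fun x a => {y | ∃ p q, x = Quotient.mk s p ∧ y = Quotient.mk s q ∧ q ∈ M.step p a}
  start := {x | ∃ p ∈ M.start, x = Quotient.mk s p}
  accept := {x | ∃ p ∈ M.accept, x = Quotient.mk s p}

private lemma quot_stepSet {A Q : Type*} (M : NFA A Q) (E : Q → Q → Prop)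
    (h : RightInvariant M E) (S : Set Q) (a : A) :
    (quotNFA M ⟨E, h.1⟩).stepSet (Quotient.mk ⟨E, h.1⟩ '' S) a
      = Quotient.mk ⟨E, h.1⟩ '' M.stepSet S a := by
  ext y
  simp only [NFA.stepSet, Set.mem_iUnion, Set.mem_image, quotNFA, Set.mem_setOf_eq]
  constructor
  · rintro ⟨x, ⟨p₀, hp₀, rfl⟩, p, q, hpq, rfl, hq⟩
    have hE : E p₀ p := Quotient.exact hpq
    obtain ⟨q', hq', hEq⟩ := (h.2.2 p₀ p a hE).2 q hq
    refine ⟨q', ⟨p₀, hp₀, hq'⟩, ?_⟩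
    exact Quotient.sound hEq
  · rintro ⟨q, ⟨p, hp, hq⟩, rfl⟩
    exact ⟨Quotient.mk _ p, ⟨p, hp, rfl⟩, p, q, rfl, rfl, hq⟩

private lemma quot_evalFrom {A Q : Type*} (M : NFA A Q) (E : Q → Q → Prop)
    (h : RightInvariant M E) (S : Set Q) (w : List A) :
    (quotNFA M ⟨E, h.1⟩).evalFrom (Quotient.mk ⟨E, h.1⟩ '' S) w
      = Quotient.mk ⟨E, h.1⟩ '' M.evalFrom S w := by
  induction w generalizing S with
  | nil => simp [NFA.evalFrom]
  | cons a w ih =>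
    simp only [NFA.evalFrom, List.foldl_cons]
    rw [quot_stepSet M E h]
    exact ih (M.stepSet S a)

/-- Quotienting an NFA by a right-invariant equivalence preserves the language. -/
theorem quotNFA_accepts {A Q : Type*} (M : NFA A Q) (E : Q → Q → Prop)
    (h : RightInvariant M E) :
    (quotNFA M ⟨E, h.1⟩).accepts = M.accepts := by
  ext w
  have hstart : (quotNFA M ⟨E, h.1⟩).start = Quotient.mk ⟨E, h.1⟩ '' M.start := by
    ext x; simp [quotNFA, Set.mem_image, eq_comm]
  simp only [NFA.accepts, NFA.eval, Set.mem_setOf_eq, hstart, quot_evalFrom M E h]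
  constructor
  · rintro ⟨X, ⟨p, hp, rfl⟩, q, hq, hpq⟩
    exact ⟨q, (h.2.1 p q (h.1.symm (Quotient.exact hpq))).1 hp, hq⟩
  · rintro ⟨q, hq, hq'⟩
    exact ⟨Quotient.mk _ q, ⟨q, hq, rfl⟩, q, hq', rfl⟩
end

section
/- The coarsest right-invariant equivalence relation ≡_R on the states of an NFA A exists: the set of right-invariant equivalence relations on A is closed under taking the equivalence closure of unions, and hence has a maximum element under inclusion. -/
private lemma eqvgen_rightInvariant {A Q : Type*} (M : NFA A Q)
    (S : Set (Q → Q → Prop)) (hS : ∀ E ∈ S, RightInvariant M E) :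
    RightInvariant M (Relation.EqvGen (fun p q => ∃ E ∈ S, E p q)) := by
  set R : Q → Q → Prop := fun p q => ∃ E ∈ S, E p q with hR
  refine ⟨Relation.EqvGen.is_equivalence R, ?_⟩
  have key : ∀ p q, Relation.EqvGen R p q →
      ((p ∈ M.accept ↔ q ∈ M.accept) ∧
       ∀ a, (∀ r ∈ M.step p a, ∃ s ∈ M.step q a, Relation.EqvGen R r s) ∧
            (∀ s ∈ M.step q a, ∃ r ∈ M.step p a, Relation.EqvGen R r s)) := by
    intro p q h
    induction h with
    | rel p q hpq =>
      obtain ⟨E, hE, hpq⟩ := hpq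
      obtain ⟨_, hacc, hstep⟩ := hS E hE
      refine ⟨hacc p q hpq, fun a => ?_⟩
      obtain ⟨h1, h2⟩ := hstep p q a hpq
      constructor
      · intro r hr
        obtain ⟨s, hs, hrs⟩ := h1 r hr
        exact ⟨s, hs, Relation.EqvGen.rel _ _ ⟨E, hE, hrs⟩⟩
      · intro s hs
        obtain ⟨r, hr, hrs⟩ := h2 s hs
        exact ⟨r, hr, Relation.EqvGen.rel _ _ ⟨E, hE, hrs⟩⟩
    | refl p =>
      exact ⟨Iff.rfl, fun a =>
        ⟨fun r hr => ⟨r, hr, Relation.EqvGen.refl r⟩,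
         fun s hs => ⟨s, hs, Relation.EqvGen.refl s⟩⟩⟩
    | symm p q _ ih =>
      obtain ⟨hacc, hstep⟩ := ih
      refine ⟨hacc.symm, fun a => ?_⟩
      obtain ⟨h1, h2⟩ := hstep a
      constructor
      · intro r hr
        obtain ⟨s, hs, hrs⟩ := h2 r hr
        exact ⟨s, hs, Relation.EqvGen.symm _ _ hrs⟩
      · intro s hs
        obtain ⟨r, hr, hrs⟩ := h1 s hs
        exact ⟨r, hr, Relation.EqvGen.symm _ _ hrs⟩
    | trans p q r _ _ ih1 ih2 =>
      obtain ⟨hacc1, hstep1⟩ := ih1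
      obtain ⟨hacc2, hstep2⟩ := ih2
      refine ⟨hacc1.trans hacc2, fun a => ?_⟩
      obtain ⟨h11, h12⟩ := hstep1 a
      obtain ⟨h21, h22⟩ := hstep2 a
      constructor
      · intro x hx
        obtain ⟨y, hy, hxy⟩ := h11 x hx
        obtain ⟨z, hz, hyz⟩ := h21 y hy
        exact ⟨z, hz, Relation.EqvGen.trans _ _ _ hxy hyz⟩
      · intro z hz
        obtain ⟨y, hy, hyz⟩ := h22 z hz
        obtain ⟨x, hx, hxy⟩ := h12 y hy
        exact ⟨x, hx, Relation.EqvGen.trans _ _ _ hxy hyz⟩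
  exact ⟨fun p q h => (key p q h).1, fun p q a h => (key p q h).2 a⟩

/-- The right-invariant equivalences on a (finite-state) NFA are closed under
equivalence closure of unions, hence there is a coarsest one `≡_R`. -/
theorem coarsest_rightInvariant_exists {A Q : Type*} [Fintype Q] (M : NFA A Q) :
    (∀ S : Set (Q → Q → Prop), (∀ E ∈ S, RightInvariant M E) →
      RightInvariant M (Relation.EqvGen (fun p q => ∃ E ∈ S, E p q))) ∧
    ∃ Emax : Q → Q → Prop, RightInvariant M Emax ∧
      ∀ E : Q → Q → Prop, RightInvariant M E → ∀ p q, E p q → Emax p q := by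
  refine ⟨fun S hS => eqvgen_rightInvariant M S hS, ?_⟩
  refine ⟨Relation.EqvGen (fun p q => ∃ E ∈ {E | RightInvariant M E}, E p q),
    eqvgen_rightInvariant M _ (fun E hE => hE), ?_⟩
  intro E hE p q hpq
  exact Relation.EqvGen.rel _ _ ⟨E, hE, hpq⟩
end

section
/- If E is a right-invariant equivalence on the reversal Aʳ of an NFA A (a left-invariant equivalence on A), then L(A/E) = L(A), where the quotient is taken on A itself. -/
/-- The reversal of an NFA (with set of initial states). -/
def reverseNFA {A Q : Type*} (M : NFA A Q) : NFA A Q where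
  step := fun q a => {p | q ∈ M.step p a}
  start := M.accept
  accept := M.start

/-!
A word `x` leads `A/E` from a start class to the class of `p` iff it leads `A` from a start state
to `p` itself. The projection `A → A/E` shows one direction. For the other, left invariance says
that `E`-related states have `E`-related sets of predecessors and that the start set is a union
of classes, so a run of `A/E` can be lifted backwards, letter by letter, to a run of `A` that ends
exactly in `p`. Acceptance is then read off in the final class.
-/

namespace RightInvariant

variable {A Q : Type*} {M : NFA A Q} {E : Q → Q → Prop}

theorem reverseNFA_mem_start_iff (h : RightInvariant (reverseNFA M) E) {p q : Q} (hpq : E p q) :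
    p ∈ M.start ↔ q ∈ M.start :=
  h.2.1 p q hpq

theorem reverseNFA_exists_pred (h : RightInvariant (reverseNFA M) E) {p q r : Q} {a : A}
    (hpq : E p q) (hr : q ∈ M.step r a) : ∃ r', p ∈ M.step r' a ∧ E r' r :=
  (h.2.2 p q a hpq).2 r hr

end RightInvariant

section quotNFA

variable {A Q : Type*} (M : NFA A Q)

theorem mk_mem_eval_quotNFA (s : Setoid Q) {x : List A} {p : Q} (hp : p ∈ M.eval x) :
    Quotient.mk s p ∈ (quotNFA M s).eval x := by
  induction x using List.reverseRecOn generalizing p with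
  | nil => exact ⟨p, hp, rfl⟩
  | append_singleton xs a ih =>
    rw [NFA.eval_append_singleton, NFA.mem_stepSet] at hp ⊢
    obtain ⟨r, hr, hrp⟩ := hp
    exact ⟨Quotient.mk s r, ih hr, r, p, rfl, rfl, hrp⟩

theorem mem_eval_of_mk_mem_eval_quotNFA {E : Q → Q → Prop} (h : RightInvariant (reverseNFA M) E)
    {x : List A} {p : Q} (hp : Quotient.mk ⟨E, h.1⟩ p ∈ (quotNFA M ⟨E, h.1⟩).eval x) :
    p ∈ M.eval x := by
  induction x using List.reverseRecOn generalizing p with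
  | nil =>
    obtain ⟨p₀, hp₀, hp₀p⟩ := hp
    exact (h.reverseNFA_mem_start_iff (Quotient.exact hp₀p)).mpr hp₀
  | append_singleton xs a ih =>
    rw [NFA.eval_append_singleton, NFA.mem_stepSet] at hp ⊢
    obtain ⟨_, hy, r, q, rfl, hqp, hrq⟩ := hp
    obtain ⟨r', hr'p, hr'r⟩ := h.reverseNFA_exists_pred (Quotient.exact hqp) hrq
    exact ⟨r', ih (Quotient.sound (s := ⟨E, h.1⟩) hr'r ▸ hy), hr'p⟩

end quotNFA

/-- Quotienting an NFA by a left-invariant equivalence (i.e. a right-invariant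
equivalence of its reversal) preserves the language. -/
theorem quotNFA_left_accepts {A Q : Type*} (M : NFA A Q) (E : Q → Q → Prop)
    (h : RightInvariant (reverseNFA M) E) :
    (quotNFA M ⟨E, h.1⟩).accepts = M.accepts := by
  ext x
  constructor
  · rintro ⟨_, ⟨p, hp, rfl⟩, hx⟩
    exact ⟨p, hp, mem_eval_of_mk_mem_eval_quotNFA M h hx⟩
  · rintro ⟨p, hp, hx⟩
    exact ⟨_, ⟨p, hp, rfl⟩, mk_mem_eval_quotNFA M _ hx⟩
end
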